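/- Let W be the set of 4×2 complex matrices both of whose columns are nonzero, and let S = ℂ× act on W by scaling the bottom two rows: s ∘ A multiplies rows 3 and 4 of A by s. Let pr : W → Mat₂(ℂ) send A to its top 2×2 block. Then pr is S-invariant, surjective, and any S-invariant continuous map φ : W → Z into a Hausdorff topological space satisfies φ(A) = φ(A') whenever A and A' have the same top 2×2 block (i.e., φ factors through pr as a function). -/

import Mathlib

open Matrix Filter Topology

def Wset : Set (Matrix (Fin 4) (Fin 2) ℂ) :=
  {A | (∃ i, A i 0 ≠ 0) ∧ (∃ i, A i 1 ≠ 0)}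

noncomputable def actS (s : ℂ) (A : Matrix (Fin 4) (Fin 2) ℂ) : Matrix (Fin 4) (Fin 2) ℂ :=
  !![1, 0, 0, 0; 0, 1, 0, 0; 0, 0, s, 0; 0, 0, 0, s] * A

def prMap (A : Matrix (Fin 4) (Fin 2) ℂ) : Matrix (Fin 2) (Fin 2) ℂ :=
  !![A 0 0, A 0 1; A 1 0, A 1 1]

/-! `actS s A` depends continuously on `s ∈ ℂ` and `actS 0 A` is the top block
padded with zeros. If that padded matrix lies in `W`, continuity at `s = 0` and invariance give
`φ A = φ (actS 0 A)`, which only depends on `prMap A`. Otherwise, move `A` and `A'` by the same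
small perturbation of the first row into this good case and pass to the limit. -/

lemma eq_of_eventually_eq_comp {Y X Z : Type*} [TopologicalSpace Y] [TopologicalSpace X]
    [TopologicalSpace Z] [T2Space Z] {a : Y} [(𝓝[≠] a).NeBot] {φ : X → Z} {g g' : Y → X}
    (hg : ContinuousAt g a) (hg' : ContinuousAt g' a)
    (hφ : ContinuousAt φ (g a)) (hφ' : ContinuousAt φ (g' a))
    (h : ∀ᶠ y in 𝓝[≠] a, φ (g y) = φ (g' y)) : φ (g a) = φ (g' a) :=
  tendsto_nhds_unique_of_eventuallyEq ((hφ.comp hg).tendsto.mono_left nhdsWithin_le_nhds)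
    ((hφ'.comp hg').tendsto.mono_left nhdsWithin_le_nhds) h

lemma isOpen_Wset : IsOpen Wset := by
  have hcol : ∀ j : Fin 2, IsOpen {A : Matrix (Fin 4) (Fin 2) ℂ | ∃ i, A i j ≠ 0} := fun j => by
    simp only [Set.ofPred_exists]
    exact isOpen_iUnion fun i => isOpen_ne_fun (continuous_id.matrix_elem i j) continuous_const
  exact (hcol 0).inter (hcol 1)

lemma actS_apply (s : ℂ) (A : Matrix (Fin 4) (Fin 2) ℂ) (i : Fin 4) (j : Fin 2) :
    actS s A i j = (if (i : ℕ) < 2 then 1 else s) * A i j := by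
  fin_cases i <;> simp [actS, Matrix.mul_apply, Fin.sum_univ_four]

lemma continuous_actS_left (A : Matrix (Fin 4) (Fin 2) ℂ) : Continuous fun s => actS s A := by
  refine continuous_matrix fun i j => ?_
  simp only [actS_apply]
  split_ifs <;> fun_prop

lemma prMap_actS (s : ℂ) (A : Matrix (Fin 4) (Fin 2) ℂ) : prMap (actS s A) = prMap A := by
  ext i j
  fin_cases i <;> fin_cases j <;> simp [prMap, actS_apply]

lemma actS_mem_Wset {s : ℂ} (hs : s ≠ 0) {A : Matrix (Fin 4) (Fin 2) ℂ} (hA : A ∈ Wset) :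
    actS s A ∈ Wset := by
  have hfactor : ∀ i : Fin 4, (if (i : ℕ) < 2 then 1 else s) ≠ 0 := fun i => by
    split_ifs <;> simp [hs]
  obtain ⟨⟨i, hi⟩, ⟨k, hk⟩⟩ := hA
  exact ⟨⟨i, actS_apply s A i 0 ▸ mul_ne_zero (hfactor i) hi⟩,
    ⟨k, actS_apply s A k 1 ▸ mul_ne_zero (hfactor k) hk⟩⟩

lemma mem_Wset_of_actS_mem {s : ℂ} {A : Matrix (Fin 4) (Fin 2) ℂ} (hA : actS s A ∈ Wset) :
    A ∈ Wset := by
  obtain ⟨⟨i, hi⟩, ⟨k, hk⟩⟩ := hA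
  exact ⟨⟨i, right_ne_zero_of_mul (actS_apply s A i 0 ▸ hi)⟩,
    ⟨k, right_ne_zero_of_mul (actS_apply s A k 1 ▸ hk)⟩⟩

lemma actS_zero_eq_of_prMap_eq {A A' : Matrix (Fin 4) (Fin 2) ℂ} (h : prMap A = prMap A') :
    actS 0 A = actS 0 A' := by
  rw [← Matrix.ext_iff] at h
  simp only [prMap, Fin.forall_fin_two, of_apply, cons_val', cons_val_zero, cons_val_one,
    empty_val', cons_val_fin_one] at h
  ext i j
  fin_cases i <;> fin_cases j <;> simp [actS_apply, h]

lemma exists_mem_Wset_prMap_eq (B : Matrix (Fin 2) (Fin 2) ℂ) : ∃ A ∈ Wset, prMap A = B :=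
  ⟨!![B 0 0, B 0 1; B 1 0, B 1 1; 1, 1; 1, 1], ⟨⟨2, by simp⟩, ⟨2, by simp⟩⟩,
    by ext i j; fin_cases i <;> fin_cases j <;> rfl⟩

section Invariant

variable {Z : Type*} [TopologicalSpace Z] [T2Space Z] {φ : Matrix (Fin 4) (Fin 2) ℂ → Z}

lemma eq_apply_actS_zero (hcont : ContinuousOn φ Wset)
    (hinv : ∀ s : ℂ, s ≠ 0 → ∀ A ∈ Wset, φ (actS s A) = φ A)
    {A : Matrix (Fin 4) (Fin 2) ℂ} (h0 : actS 0 A ∈ Wset) :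
    φ A = φ (actS 0 A) := by
  have hA := mem_Wset_of_actS_mem h0
  refine (eq_of_eventually_eq_comp (g := fun _ : ℂ => A) (g' := fun s => actS s A) (a := 0)
    continuousAt_const (continuous_actS_left A).continuousAt
    (hcont.continuousAt (isOpen_Wset.mem_nhds hA))
    (hcont.continuousAt (isOpen_Wset.mem_nhds h0)) ?_)
  filter_upwards [self_mem_nhdsWithin] with s hs
  exact (hinv s hs A hA).symm

lemma eq_of_prMap_eq (hcont : ContinuousOn φ Wset)
    (hinv : ∀ s : ℂ, s ≠ 0 → ∀ A ∈ Wset, φ (actS s A) = φ A)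
    {A A' : Matrix (Fin 4) (Fin 2) ℂ} (hA : A ∈ Wset) (hA' : A' ∈ Wset)
    (h : prMap A = prMap A') : φ A = φ A' := by
  set E : Matrix (Fin 4) (Fin 2) ℂ := of fun i _ => if i = 0 then 1 else 0
  have hlin : ∀ (ε : ℂ) B, actS 0 (B + ε • E) = actS 0 B + ε • actS 0 E := fun ε B => by
    simp only [actS, Matrix.mul_add, Matrix.mul_smul]
  have hsame : ∀ ε : ℂ, actS 0 (A + ε • E) = actS 0 (A' + ε • E) := fun ε => by
    rw [hlin, hlin, actS_zero_eq_of_prMap_eq h]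
  have hne : ∀ c : ℂ, ∀ᶠ ε in 𝓝[≠] (0 : ℂ), c + ε ≠ 0 := fun c => by
    filter_upwards [(eventually_cofinite_ne (-c)).filter_mono (nhdsNE_le_cofinite 0)] with ε hε
    contrapose! hε
    linear_combination hε
  have hgood : ∀ᶠ ε in 𝓝[≠] (0 : ℂ), actS 0 (A + ε • E) ∈ Wset := by
    filter_upwards [hne (A 0 0), hne (A 0 1)] with ε h0 h1
    exact ⟨⟨0, by simpa [actS_apply, E] using h0⟩, ⟨0, by simpa [actS_apply, E] using h1⟩⟩
  have hφA := hcont.continuousAt (isOpen_Wset.mem_nhds hA)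
  have hφA' := hcont.continuousAt (isOpen_Wset.mem_nhds hA')
  simpa using eq_of_eventually_eq_comp (a := (0 : ℂ)) (g := fun ε => A + ε • E)
    (g' := fun ε => A' + ε • E) (by fun_prop) (by fun_prop) (by simpa using hφA)
    (by simpa using hφA') <| by
      filter_upwards [hgood] with ε hε
      calc φ (A + ε • E) = φ (actS 0 (A + ε • E)) := eq_apply_actS_zero hcont hinv hε
        _ = φ (actS 0 (A' + ε • E)) := by rw [hsame]
        _ = φ (A' + ε • E) := (eq_apply_actS_zero hcont hinv (hsame ε ▸ hε)).symm

end Invariant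

theorem stmt18 {Z : Type*} [TopologicalSpace Z] [T2Space Z]
    (φ : Matrix (Fin 4) (Fin 2) ℂ → Z) (hcont : ContinuousOn φ Wset)
    (hinv : ∀ (s : ℂ), s ≠ 0 → ∀ A ∈ Wset, φ (actS s A) = φ A) :
    (∀ (s : ℂ), s ≠ 0 → ∀ A ∈ Wset, actS s A ∈ Wset ∧ prMap (actS s A) = prMap A) ∧
    (∀ B : Matrix (Fin 2) (Fin 2) ℂ, ∃ A ∈ Wset, prMap A = B) ∧
    (∀ A ∈ Wset, ∀ A' ∈ Wset, prMap A = prMap A' → φ A = φ A') :=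
  ⟨fun s hs A hA => ⟨actS_mem_Wset hs hA, prMap_actS s A⟩, exists_mem_Wset_prMap_eq,
    fun _ hA _ hA' h => eq_of_prMap_eq hcont hinv hA hA' h⟩
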